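/- arXiv:2603.14142 — 11 statements merged into one kernel-verified Lean document; each statement's English description precedes it below -/
import Mathlib

section
/- Let A be a complex matrix with rank(A*A) = rank(A). Then for any two von Neumann inverses Y₁, Y₂ of A*A (i.e. A*A·Yᵢ·A*A = A*A), one has A·Y₁·A* = A·Y₂·A*; moreover this common matrix A·Y₁·A* is Hermitian. -/
open Matrix

open scoped ComplexOrder in
lemma vN_aux {m n : ℕ} (A : Matrix (Fin m) (Fin n) ℂ)
    (Y Z : Matrix (Fin n) (Fin n) ℂ)
    (hY : (Aᴴ * A) * Y * (Aᴴ * A) = Aᴴ * A)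
    (hZ : (Aᴴ * A) * Z * (Aᴴ * A) = Aᴴ * A) :
    A * Y * Aᴴ = A * Z * Aᴴ := by
  have h1 : ((Aᴴ * A) * Y - (Aᴴ * A) * Z) * (Aᴴ * A) = 0 := by
    rw [sub_mul, hY, hZ, sub_self]
  rw [mul_conjTranspose_mul_self_eq_zero] at h1
  have h2 : (Aᴴ * A) * (Y * Aᴴ - Z * Aᴴ) = 0 := by
    simp only [Matrix.mul_sub, ← Matrix.mul_assoc]
    rw [Matrix.sub_mul] at h1
    exact h1
  rw [conjTranspose_mul_self_mul_eq_zero, Matrix.mul_sub] at h2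
  have := sub_eq_zero.mp h2
  rwa [← Matrix.mul_assoc, ← Matrix.mul_assoc] at this

theorem vonNeumann_inverse_invariance_and_hermitian {m n : ℕ}
    (A : Matrix (Fin m) (Fin n) ℂ)
    (hrank : (Aᴴ * A).rank = A.rank)
    (Y₁ Y₂ : Matrix (Fin n) (Fin n) ℂ)
    (hY₁ : (Aᴴ * A) * Y₁ * (Aᴴ * A) = Aᴴ * A)
    (hY₂ : (Aᴴ * A) * Y₂ * (Aᴴ * A) = Aᴴ * A) :
    A * Y₁ * Aᴴ = A * Y₂ * Aᴴ ∧ (A * Y₁ * Aᴴ)ᴴ = A * Y₁ * Aᴴ := by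
  have hY₁' : (Aᴴ * A) * Y₁ᴴ * (Aᴴ * A) = Aᴴ * A := by
    have := congrArg conjTranspose hY₁
    simpa [Matrix.mul_assoc] using this
  refine ⟨vN_aux A Y₁ Y₂ hY₁ hY₂, ?_⟩
  have := vN_aux A Y₁ᴴ Y₁ hY₁' hY₁
  calc (A * Y₁ * Aᴴ)ᴴ = A * Y₁ᴴ * Aᴴ := by simp [Matrix.mul_assoc]
    _ = A * Y₁ * Aᴴ := this
end

section
/- Let M be the (m+n+2)×(m+n+2) complex block matrix M = [[0, xᵀ, a, 0],[y, 0, 0, 0],[b, 0, 0, zᵀ],[0, 0, w, 0]] where x, y ∈ ℂᵐ, z, w ∈ ℂⁿ, and a, b ∈ ℂ are nonzero. If xᵀy ≠ 0 and zᵀw ≠ 0, then the matrix G = [[0, (xᵀy)⁻¹xᵀ, 0, 0],[(xᵀy)⁻¹y, 0, 0, -a((xᵀy)(zᵀw))⁻¹ y zᵀ],[0, 0, 0, (zᵀw)⁻¹zᵀ],[0, -b((xᵀy)(zᵀw))⁻¹ w xᵀ, (zᵀw)⁻¹w, 0]] is the group inverse of M, i.e. MGM = M, GMG = G, and MG = GM.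 -/
open Matrix BigOperators

noncomputable section

abbrev Idx (m n : ℕ) := (Unit ⊕ Fin m) ⊕ (Unit ⊕ Fin n)

/-- 4×4 block builder for matrices indexed by a double star digraph vertex set:
the blocks correspond to the first center, the first star's leaves, the second
center and the second star's leaves, in this order. -/
def blk {m n : ℕ}
    (A11 : ℂ) (A12 : Fin m → ℂ) (A13 : ℂ) (A14 : Fin n → ℂ)
    (A21 : Fin m → ℂ) (A22 : Fin m → Fin m → ℂ) (A23 : Fin m → ℂ) (A24 : Fin m → Fin n → ℂ)
    (A31 : ℂ) (A32 : Fin m → ℂ) (A33 : ℂ) (A34 : Fin n → ℂ)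
    (A41 : Fin n → ℂ) (A42 : Fin n → Fin m → ℂ) (A43 : Fin n → ℂ) (A44 : Fin n → Fin n → ℂ) :
    Matrix (Idx m n) (Idx m n) ℂ :=
  Matrix.of fun i j =>
    match i, j with
    | .inl (.inl _), .inl (.inl _) => A11
    | .inl (.inl _), .inl (.inr k) => A12 k
    | .inl (.inl _), .inr (.inl _) => A13
    | .inl (.inl _), .inr (.inr k) => A14 k
    | .inl (.inr i'), .inl (.inl _) => A21 i'
    | .inl (.inr i'), .inl (.inr k) => A22 i' k
    | .inl (.inr i'), .inr (.inl _) => A23 i'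
    | .inl (.inr i'), .inr (.inr k) => A24 i' k
    | .inr (.inl _), .inl (.inl _) => A31
    | .inr (.inl _), .inl (.inr k) => A32 k
    | .inr (.inl _), .inr (.inl _) => A33
    | .inr (.inl _), .inr (.inr k) => A34 k
    | .inr (.inr i'), .inl (.inl _) => A41 i'
    | .inr (.inr i'), .inl (.inr k) => A42 i' k
    | .inr (.inr i'), .inr (.inl _) => A43 i'
    | .inr (.inr i'), .inr (.inr k) => A44 i' k

/-- The canonical matrix `[[0, xᵀ, a, 0],[y, 0, 0, 0],[b, 0, 0, zᵀ],[0, 0, w, 0]]`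
associated with a double star digraph. -/
def dsM {m n : ℕ} (a b : ℂ) (x y : Fin m → ℂ) (z w : Fin n → ℂ) :
    Matrix (Idx m n) (Idx m n) ℂ :=
  blk 0 x a (fun _ => 0)
      y (fun _ _ => 0) (fun _ => 0) (fun _ _ => 0)
      b (fun _ => 0) 0 z
      (fun _ => 0) (fun _ _ => 0) w (fun _ _ => 0)

/-- `xᵀy`. -/
def dotT {k : ℕ} (x y : Fin k → ℂ) : ℂ := ∑ i, x i * y i

/-- `x*x = ∑ conj xᵢ · xᵢ`. -/
def gram {k : ℕ} (x : Fin k → ℂ) : ℂ := ∑ i, star (x i) * x i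

end


private lemma key {k : ℕ} (u v : Fin k → ℂ) (f : Fin k → ℂ) (c : ℂ)
    (h : ∀ i, f i = c * (u i * v i)) :
    Finset.sum Finset.univ f = c * dotT u v := by
  unfold dotT
  rw [Finset.mul_sum]
  exact Finset.sum_congr rfl fun i _ => h i

private lemma key2 {k l : ℕ} (u v : Fin k → ℂ) (s t : Fin l → ℂ)
    (f : Fin l → Fin k → ℂ) (c : ℂ)
    (h : ∀ i j, f i j = c * (u j * v j) * (s i * t i)) :
    ∑ i, ∑ j, f i j = c * dotT u v * dotT s t := by
  have h1 : ∀ i, Finset.sum Finset.univ (f i) = (c * dotT u v) * (s i * t i) := fun i => by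
    rw [key u v (f i) (c * (s i * t i)) (fun j => by rw [h i j]; ring)]; ring
  rw [key s t _ (c * dotT u v) h1]

set_option maxHeartbeats 2000000 in
theorem dsM_group_inverse {m n : ℕ} (a b : ℂ) (ha : a ≠ 0) (hb : b ≠ 0)
    (x y : Fin m → ℂ) (z w : Fin n → ℂ)
    (hxy : dotT x y ≠ 0) (hzw : dotT z w ≠ 0) :
    letI M := dsM a b x y z w
    letI G := blk 0 (fun i => (dotT x y)⁻¹ * x i) 0 (fun _ => 0)
        (fun i => (dotT x y)⁻¹ * y i) (fun _ _ => 0) (fun _ => 0)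
          (fun i j => -a * ((dotT x y) * (dotT z w))⁻¹ * y i * z j)
        0 (fun _ => 0) 0 (fun j => (dotT z w)⁻¹ * z j)
        (fun _ => 0) (fun i j => -b * ((dotT x y) * (dotT z w))⁻¹ * w i * x j)
          (fun i => (dotT z w)⁻¹ * w i) (fun _ _ => 0)
    M * G * M = M ∧ G * M * G = G ∧ M * G = G * M := by
  have hprod : dotT x y * dotT z w ≠ 0 := mul_ne_zero hxy hzw
  refine ⟨?_, ?_, ?_⟩
  · ext i j
    rcases i with (_|i)|(_|i) <;> rcases j with (_|j)|(_|j) <;>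
      simp only [dsM, blk, Matrix.mul_apply, Matrix.of_apply, Fintype.sum_sum_type,
        Finset.univ_unique, Finset.sum_singleton, mul_zero, zero_mul, add_zero, zero_add,
        mul_add, add_mul, Finset.sum_add_distrib, Finset.mul_sum, Finset.sum_mul,
        Finset.sum_const_zero, neg_mul, mul_neg, neg_neg, neg_zero]
    case inl.inl.inl.inr =>
      rw [key x y (fun k => x k * ((dotT x y)⁻¹ * y k) * x j) ((dotT x y)⁻¹ * x j)
        (fun k => by ring)]
      field_simp
      try ring
    case inl.inl.inr.inl =>
      rw [key x y (fun k => x k * ((dotT x y)⁻¹ * y k) * a) ((dotT x y)⁻¹ * a)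
          (fun k => by ring),
        key2 x y z w (fun i k => -(x k * (a * (dotT x y * dotT z w)⁻¹ * y k * z i) * w i))
          (-(a * (dotT x y * dotT z w)⁻¹)) (fun i k => by ring),
        key z w (fun k => a * ((dotT z w)⁻¹ * z k) * w k) (a * (dotT z w)⁻¹)
          (fun k => by ring)]
      field_simp
      ring
    case inl.inr.inl.inl =>
      rw [key x y (fun k => y i * ((dotT x y)⁻¹ * x k) * y k) ((dotT x y)⁻¹ * y i)
        (fun k => by ring)]
      field_simp
      try ring
    case inr.inl.inl.inl =>
      rw [key x y (fun k => b * ((dotT x y)⁻¹ * x k) * y k) (b * (dotT x y)⁻¹)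
          (fun k => by ring),
        key2 z w x y (fun i k => -(z k * (b * (dotT x y * dotT z w)⁻¹ * w k * x i) * y i))
          (-(b * (dotT x y * dotT z w)⁻¹)) (fun i k => by ring),
        key z w (fun k => z k * ((dotT z w)⁻¹ * w k) * b) ((dotT z w)⁻¹ * b)
          (fun k => by ring)]
      field_simp
      ring
    case inr.inl.inr.inr =>
      rw [key z w (fun k => z k * ((dotT z w)⁻¹ * w k) * z j) ((dotT z w)⁻¹ * z j)
        (fun k => by ring)]
      field_simp
      try ring
    case inr.inr.inr.inl =>
      rw [key z w (fun k => w i * ((dotT z w)⁻¹ * z k) * w k) ((dotT z w)⁻¹ * w i)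
        (fun k => by ring)]
      field_simp
      try ring
  · ext i j
    rcases i with (_|i)|(_|i) <;> rcases j with (_|j)|(_|j) <;>
      simp only [dsM, blk, Matrix.mul_apply, Matrix.of_apply, Fintype.sum_sum_type,
        Finset.univ_unique, Finset.sum_singleton, mul_zero, zero_mul, add_zero, zero_add,
        mul_add, add_mul, Finset.sum_add_distrib, Finset.mul_sum, Finset.sum_mul,
        Finset.sum_const_zero, neg_mul, mul_neg, neg_neg, neg_zero]
    case inl.inl.inl.inr =>
      rw [key x y (fun k => (dotT x y)⁻¹ * x k * y k * ((dotT x y)⁻¹ * x j))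
        ((dotT x y)⁻¹ * ((dotT x y)⁻¹ * x j)) (fun k => by ring)]
      field_simp
      try ring
    case inl.inr.inl.inl =>
      rw [key x y (fun k => (dotT x y)⁻¹ * y i * x k * ((dotT x y)⁻¹ * y k))
        ((dotT x y)⁻¹ * y i * (dotT x y)⁻¹) (fun k => by ring)]
      field_simp
      try ring
    case inl.inr.inr.inr =>
      rw [key x y
          (fun k => -((dotT x y)⁻¹ * y i * x k * (a * (dotT x y * dotT z w)⁻¹ * y k * z j)))
          (-((dotT x y)⁻¹ * y i * (a * (dotT x y * dotT z w)⁻¹ * z j))) (fun k => by ring),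
        key z w
          (fun k => -(a * (dotT x y * dotT z w)⁻¹ * y i * z k * w k * ((dotT z w)⁻¹ * z j)))
          (-(a * (dotT x y * dotT z w)⁻¹ * y i * ((dotT z w)⁻¹ * z j))) (fun k => by ring)]
      field_simp
      ring
    case inr.inl.inr.inr =>
      rw [key z w (fun k => (dotT z w)⁻¹ * z k * w k * ((dotT z w)⁻¹ * z j))
        ((dotT z w)⁻¹ * ((dotT z w)⁻¹ * z j)) (fun k => by ring)]
      field_simp
      try ring
    case inr.inr.inl.inr =>
      rw [key x y
          (fun k => -(b * (dotT x y * dotT z w)⁻¹ * w i * x k * y k * ((dotT x y)⁻¹ * x j)))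
          (-(b * (dotT x y * dotT z w)⁻¹ * w i * ((dotT x y)⁻¹ * x j))) (fun k => by ring),
        key z w
          (fun k => -((dotT z w)⁻¹ * w i * z k * (b * (dotT x y * dotT z w)⁻¹ * w k * x j)))
          (-((dotT z w)⁻¹ * w i * (b * (dotT x y * dotT z w)⁻¹ * x j))) (fun k => by ring)]
      field_simp
      ring
    case inr.inr.inr.inl =>
      rw [key z w (fun k => (dotT z w)⁻¹ * w i * z k * ((dotT z w)⁻¹ * w k))
        ((dotT z w)⁻¹ * w i * (dotT z w)⁻¹) (fun k => by ring)]
      field_simp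
      try ring
  · ext i j
    rcases i with (_|i)|(_|i) <;> rcases j with (_|j)|(_|j) <;>
      simp only [dsM, blk, Matrix.mul_apply, Matrix.of_apply, Fintype.sum_sum_type,
        Finset.univ_unique, Finset.sum_singleton, mul_zero, zero_mul, add_zero, zero_add,
        mul_add, add_mul, Finset.sum_add_distrib, Finset.mul_sum, Finset.sum_mul,
        Finset.sum_const_zero, neg_mul, mul_neg, neg_neg, neg_zero]
    case inl.inl.inl.inl =>
      exact Finset.sum_congr rfl fun k _ => by ring
    case inl.inl.inr.inr =>
      rw [key x y (fun k => -(x k * (a * (dotT x y * dotT z w)⁻¹ * y k * z j)))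
        (-(a * (dotT x y * dotT z w)⁻¹ * z j)) (fun k => by ring)]
      field_simp
      ring
    case inl.inr.inl.inr => ring
    case inl.inr.inr.inl =>
      rw [key z w (fun k => -(a * (dotT x y * dotT z w)⁻¹ * y i * z k * w k))
        (-(a * (dotT x y * dotT z w)⁻¹ * y i)) (fun k => by ring)]
      field_simp
      ring
    case inr.inl.inl.inr =>
      rw [key z w (fun k => -(z k * (b * (dotT x y * dotT z w)⁻¹ * w k * x j)))
        (-(b * (dotT x y * dotT z w)⁻¹ * x j)) (fun k => by ring)]
      field_simp
      ring
    case inr.inl.inr.inl =>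
      exact Finset.sum_congr rfl fun k _ => by ring
    case inr.inr.inl.inl =>
      rw [key x y (fun k => -(b * (dotT x y * dotT z w)⁻¹ * w i * x k * y k))
        (-(b * (dotT x y * dotT z w)⁻¹ * w i)) (fun k => by ring)]
      field_simp
      ring
    case inr.inr.inr.inr => ring
end

section
/- Let M = [[0, xᵀ, a, 0],[y, 0, 0, 0],[b, 0, 0, zᵀ],[0, 0, w, 0]] be the block matrix associated with a double star digraph (a, b nonzero scalars, x, y ∈ ℂᵐ, z, w ∈ ℂⁿ). If xᵀy = 0 and zᵀw = 0, then the matrix D = (ab)⁻¹·[[0, xᵀ, a, 0],[y, 0, 0, b⁻¹ y zᵀ],[b, 0, 0, zᵀ],[0, a⁻¹ w xᵀ, w, 0]] satisfies M³D = M², DMD = D, and MD = DM; i.e. D is the Drazin inverse of M and the Drazin index of M is at most 2. -/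
open Matrix BigOperators

/-!
Write `M = dsM a b x y z w` and `c = a b`. Because `xᵀy = zᵀw = 0`, block multiplication gives
`M⁴ = c M²`, and then `c⁻² M³` is the Drazin inverse of `M` with index at most `2`: on the core
part `M² = c`, so `c⁻¹ M` inverts `M` there, while `c⁻¹ M²` projects onto it. Computing `M³`
once more identifies `c⁻² M³` with the matrix `D` of the statement.
-/

/-- `k` is an upper bound for the Drazin index of `M`. -/
def IsDrazinInverse {A : Type*} [Monoid A] (k : ℕ) (M D : A) : Prop :=
  M ^ (k + 1) * D = M ^ k ∧ D * M * D = D ∧ M * D = D * M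

theorem isDrazinInverse_two_of_pow_four_eq {K A : Type*} [Field K] [Semiring A] [Algebra K A]
    {M : A} {c : K} (hc : c ≠ 0) (h : M ^ 4 = c • M ^ 2) :
    IsDrazinInverse 2 M ((c ^ 2)⁻¹ • M ^ 3) := by
  have hc2 : c ^ 2 ≠ 0 := pow_ne_zero 2 hc
  have h6 : M ^ 6 = c ^ 2 • M ^ 2 := by
    rw [show 6 = 2 + 4 from rfl, pow_add, h, mul_smul_comm, ← pow_add, h, smul_smul, ← sq]
  have h7 : M ^ 7 = c ^ 2 • M ^ 3 := by
    rw [pow_succ, h6, smul_mul_assoc, ← pow_succ]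
  refine ⟨?_, ?_, ?_⟩
  · rw [mul_smul_comm, ← pow_add, h6, smul_smul, inv_mul_cancel₀ hc2, one_smul]
  · rw [smul_mul_assoc, ← pow_succ, smul_mul_assoc, mul_smul_comm, ← pow_add, h7, smul_smul,
      smul_smul, mul_assoc, inv_mul_cancel₀ hc2, mul_one]
  · rw [mul_smul_comm, smul_mul_assoc, ← pow_succ, ← pow_succ']

section SumFactor

variable {ι R : Type*} [Fintype ι] [CommSemiring R] (f g : ι → R) (c : R)

theorem sum_const_mul_mul : ∑ i, c * f i * g i = c * ∑ i, f i * g i := by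
  simp only [mul_assoc, Finset.mul_sum]

theorem sum_mul_const_mul : ∑ i, f i * (c * g i) = c * ∑ i, f i * g i := by
  simp only [mul_left_comm _ c, Finset.mul_sum]

theorem sum_mul_mul_const : ∑ i, f i * (g i * c) = (∑ i, f i * g i) * c := by
  simp only [mul_assoc, Finset.sum_mul]

end SumFactor

section DoubleStar

variable {m n : ℕ} {a b : ℂ} {x y : Fin m → ℂ} {z w : Fin n → ℂ}

theorem dsM_sq (hxy : dotT x y = 0) (hzw : dotT z w = 0) :
    dsM a b x y z w ^ 2 = blk (a * b) (fun _ => 0) 0 (fun k => a * z k)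
      (fun _ => 0) (fun i k => y i * x k) (fun i => a * y i) (fun _ _ => 0)
      0 (fun k => b * x k) (a * b) (fun _ => 0)
      (fun i => b * w i) (fun _ _ => 0) (fun _ => 0) (fun i k => w i * z k) := by
  unfold dotT at hxy hzw
  ext ((_ | i) | (_ | i)) ((_ | j) | (_ | j)) <;>
    simp only [sq, dsM, blk, mul_apply, of_apply, Fintype.sum_sum_type, Fintype.sum_unique,
      zero_mul, mul_zero, Finset.sum_const_zero, add_zero, zero_add, hxy, hzw] <;>
    ring

theorem dsM_pow_four (hxy : dotT x y = 0) (hzw : dotT z w = 0) :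
    dsM a b x y z w ^ 4 = (a * b) • dsM a b x y z w ^ 2 := by
  rw [show 4 = 2 * 2 from rfl, pow_mul, dsM_sq hxy hzw]
  unfold dotT at hxy hzw
  ext ((_ | i) | (_ | i)) ((_ | j) | (_ | j)) <;>
    simp only [sq, blk, mul_apply, of_apply, Matrix.smul_apply, smul_eq_mul,
      Fintype.sum_sum_type, Fintype.sum_unique, zero_mul, mul_zero, Finset.sum_const_zero,
      add_zero, zero_add, sum_const_mul_mul, sum_mul_const_mul, sum_mul_mul_const, hxy, hzw] <;>
    ring

theorem dsM_pow_three (ha : a ≠ 0) (hb : b ≠ 0) (hxy : dotT x y = 0) (hzw : dotT z w = 0) :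
    dsM a b x y z w ^ 3 = (a * b) • blk 0 x a (fun _ => 0)
        y (fun _ _ => 0) (fun _ => 0) (fun i j => b⁻¹ * y i * z j)
        b (fun _ => 0) 0 z
        (fun _ => 0) (fun i j => a⁻¹ * w i * x j) w (fun _ _ => 0) := by
  rw [pow_succ', dsM_sq hxy hzw]
  unfold dotT at hxy hzw
  ext ((_ | i) | (_ | i)) ((_ | j) | (_ | j)) <;>
    simp only [dsM, blk, mul_apply, of_apply, Matrix.smul_apply, smul_eq_mul,
      Fintype.sum_sum_type, Fintype.sum_unique, zero_mul, mul_zero, Finset.sum_const_zero,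
      add_zero, zero_add, sum_mul_const_mul, sum_mul_mul_const, hxy, hzw] <;>
    field_simp

end DoubleStar

theorem dsM_drazin_caseI {m n : ℕ} (a b : ℂ) (ha : a ≠ 0) (hb : b ≠ 0)
    (x y : Fin m → ℂ) (z w : Fin n → ℂ)
    (hxy : dotT x y = 0) (hzw : dotT z w = 0) :
    letI M := dsM a b x y z w
    letI D := (a * b)⁻¹ • blk 0 x a (fun _ => 0)
        y (fun _ _ => 0) (fun _ => 0) (fun i j => b⁻¹ * y i * z j)
        b (fun _ => 0) 0 z
        (fun _ => 0) (fun i j => a⁻¹ * w i * x j) w (fun _ _ => 0)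
    M ^ 3 * D = M ^ 2 ∧ D * M * D = D ∧ M * D = D * M := by
  have hab : a * b ≠ 0 := mul_ne_zero ha hb
  have hD : ((a * b) ^ 2)⁻¹ • dsM a b x y z w ^ 3 = (a * b)⁻¹ • blk 0 x a (fun _ => 0)
      y (fun _ _ => 0) (fun _ => 0) (fun i j => b⁻¹ * y i * z j)
      b (fun _ => 0) 0 z
      (fun _ => 0) (fun i j => a⁻¹ * w i * x j) w (fun _ _ => 0) := by
    rw [dsM_pow_three ha hb hxy hzw, smul_smul, sq, mul_inv, mul_assoc, inv_mul_cancel₀ hab,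
      mul_one]
  have hDrazin := isDrazinInverse_two_of_pow_four_eq hab (dsM_pow_four hxy hzw)
  rwa [hD] at hDrazin
end

section
/- Let M = [[0, xᵀ, a, 0],[y, 0, 0, 0],[b, 0, 0, zᵀ],[0, 0, w, 0]] with a, b ≠ 0, x, y ∈ ℂᵐ, z, w ∈ ℂⁿ. If xᵀy ≠ 0, zᵀw = 0, and ζ := xᵀy + ab ≠ 0, then D = ζ⁻¹·[[0, xᵀ, a, 0],[y, 0, 0, ζ⁻¹ a y zᵀ],[b, 0, 0, ζ⁻¹ ab zᵀ],[0, ζ⁻¹ b w xᵀ, ζ⁻¹ ab w, 0]] satisfies M⁴D = M³, DMD = D, and MD = DM; hence D is the Drazin inverse of M with index at most 3. -/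
open Matrix BigOperators

section
lemma sumf1 {N : ℕ} (u v : Fin N → ℂ) (c : ℂ) :
    ∑ k, u k * (v k * c) = (∑ k, u k * v k) * c := by
  rw [Finset.sum_mul]; exact Finset.sum_congr rfl fun k _ => by ring
lemma sumf2 {N : ℕ} (u v : Fin N → ℂ) (c d : ℂ) :
    ∑ k, u k * (c * (v k * d)) = (∑ k, u k * v k) * (c * d) := by
  rw [Finset.sum_mul]; exact Finset.sum_congr rfl fun k _ => by ring
lemma sumf3 {N : ℕ} (u v : Fin N → ℂ) (c : ℂ) :
    ∑ k, u k * (c * v k) = (∑ k, u k * v k) * c := by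
  rw [Finset.sum_mul]; exact Finset.sum_congr rfl fun k _ => by ring
lemma sumf4 {N : ℕ} (u v : Fin N → ℂ) (c d : ℂ) :
    ∑ k, u k * (c * (d * v k)) = (∑ k, u k * v k) * (c * d) := by
  rw [Finset.sum_mul]; exact Finset.sum_congr rfl fun k _ => by ring
end

section
variable {m n : ℕ} (a b : ℂ) (x y : Fin m → ℂ) (z w : Fin n → ℂ)

lemma L1 (hzw : dotT z w = 0) :
    dsM a b x y z w * dsM a b x y z w =
    blk (dotT x y + a * b) (fun _ => 0) 0 (fun j => a * z j)
        (fun _ => 0) (fun i j => y i * x j) (fun i => a * y i) (fun _ _ => 0)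
        0 (fun j => b * x j) (a * b) (fun _ => 0)
        (fun i => b * w i) (fun _ _ => 0) (fun _ => 0) (fun i j => w i * z j) := by
  have hT : ∑ i, z i * w i = 0 := hzw
  ext i j
  rcases i with (i|i)|(i|i) <;> rcases j with (j|j)|(j|j) <;>
    simp [dsM, blk, Matrix.mul_apply, Fintype.sum_sum_type, hT, dotT] <;> ring

lemma L2 (hzw : dotT z w = 0) :
    letI ζ := dotT x y + a * b
    blk ζ (fun _ => 0) 0 (fun j => a * z j)
        (fun _ => 0) (fun i j => y i * x j) (fun i => a * y i) (fun _ _ => 0)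
        0 (fun j => b * x j) (a * b) (fun _ => 0)
        (fun i => b * w i) (fun _ _ => 0) (fun _ => 0) (fun i j => w i * z j)
      * dsM a b x y z w =
    blk 0 (fun j => ζ * x j) (ζ * a) (fun _ => 0)
        (fun i => ζ * y i) (fun _ _ => 0) (fun _ => 0) (fun i j => a * y i * z j)
        (ζ * b) (fun _ => 0) 0 (fun j => a * b * z j)
        (fun _ => 0) (fun i j => b * w i * x j) (fun i => a * b * w i) (fun _ _ => 0) := by
  have hT : ∑ i, z i * w i = 0 := hzw
  have hS : ∑ i, x i * y i = dotT x y := rfl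
  ext i j
  rcases i with (i|i)|(i|i) <;> rcases j with (j|j)|(j|j) <;>
    simp [dsM, blk, Matrix.mul_apply, Fintype.sum_sum_type, hT, dotT,
      Finset.sum_mul, Finset.mul_sum]
  all_goals try ring
  all_goals simp [mul_assoc, ← Finset.mul_sum, hT, hS]
  all_goals try ring

lemma L3 (hzw : dotT z w = 0) (hζ : dotT x y + a * b ≠ 0) :
    letI ζ := dotT x y + a * b
    blk 0 x a (fun _ => 0)
        y (fun _ _ => 0) (fun _ => 0) (fun i j => ζ⁻¹ * a * y i * z j)
        b (fun _ => 0) 0 (fun j => ζ⁻¹ * a * b * z j)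
        (fun _ => 0) (fun i j => ζ⁻¹ * b * w i * x j)
          (fun i => ζ⁻¹ * a * b * w i) (fun _ _ => 0)
      * dsM a b x y z w =
    blk ζ (fun _ => 0) 0 (fun j => a * z j)
        (fun _ => 0) (fun i j => y i * x j) (fun i => a * y i) (fun _ _ => 0)
        0 (fun j => b * x j) (a * b) (fun _ => 0)
        (fun i => b * w i) (fun _ _ => 0) (fun _ => 0)
          (fun i j => ζ⁻¹ * a * b * w i * z j) := by
  have hT : ∑ i, z i * w i = 0 := hzw
  have hS : ∑ i, x i * y i = dotT x y := rfl
  ext i j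
  rcases i with (i|i)|(i|i) <;> rcases j with (j|j)|(j|j) <;>
    simp [dsM, blk, Matrix.mul_apply, Fintype.sum_sum_type, hT, dotT,
      Finset.sum_mul, Finset.mul_sum]
  all_goals try ring
  all_goals simp [mul_assoc, ← Finset.mul_sum, hT, hS]
  all_goals try field_simp
  all_goals try ring


set_option maxHeartbeats 2000000 in
lemma L4 (hzw : dotT z w = 0) (hζ : dotT x y + a * b ≠ 0) :
    letI ζ := dotT x y + a * b
    blk ζ (fun _ => 0) 0 (fun j => a * z j)
        (fun _ => 0) (fun i j => y i * x j) (fun i => a * y i) (fun _ _ => 0)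
        0 (fun j => b * x j) (a * b) (fun _ => 0)
        (fun i => b * w i) (fun _ _ => 0) (fun _ => 0)
          (fun i j => ζ⁻¹ * a * b * w i * z j)
      * blk 0 x a (fun _ => 0)
        y (fun _ _ => 0) (fun _ => 0) (fun i j => ζ⁻¹ * a * y i * z j)
        b (fun _ => 0) 0 (fun j => ζ⁻¹ * a * b * z j)
        (fun _ => 0) (fun i j => ζ⁻¹ * b * w i * x j)
          (fun i => ζ⁻¹ * a * b * w i) (fun _ _ => 0) =
    ζ • blk 0 x a (fun _ => 0)
        y (fun _ _ => 0) (fun _ => 0) (fun i j => ζ⁻¹ * a * y i * z j)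
        b (fun _ => 0) 0 (fun j => ζ⁻¹ * a * b * z j)
        (fun _ => 0) (fun i j => ζ⁻¹ * b * w i * x j)
          (fun i => ζ⁻¹ * a * b * w i) (fun _ _ => 0) := by
  have hz1 : a * b + dotT x y ≠ 0 := by rwa [add_comm] at hζ
  have hz2 : b * a + dotT x y ≠ 0 := by rwa [mul_comm a b] at hz1
  have hT : ∑ i, z i * w i = 0 := hzw
  have hS : ∑ i, x i * y i = dotT x y := rfl
  ext i j
  rcases i with (i|i)|(i|i) <;> rcases j with (j|j)|(j|j) <;>
    simp [blk, Matrix.mul_apply, Fintype.sum_sum_type, hT, dotT,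
      Finset.sum_mul, Finset.mul_sum]
  all_goals try ring
  all_goals try simp only [mul_comm, mul_left_comm, mul_assoc, ← Finset.mul_sum]
  all_goals try simp only [sumf2, sumf4, sumf1, sumf3]
  all_goals try simp [hT, hS]
  all_goals try field_simp
  all_goals try ring


lemma L5 (hζ : dotT x y + a * b ≠ 0) :
    letI ζ := dotT x y + a * b
    ζ • blk 0 x a (fun _ => 0)
        y (fun _ _ => 0) (fun _ => 0) (fun i j => ζ⁻¹ * a * y i * z j)
        b (fun _ => 0) 0 (fun j => ζ⁻¹ * a * b * z j)
        (fun _ => 0) (fun i j => ζ⁻¹ * b * w i * x j)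
          (fun i => ζ⁻¹ * a * b * w i) (fun _ _ => 0) =
    blk 0 (fun j => ζ * x j) (ζ * a) (fun _ => 0)
        (fun i => ζ * y i) (fun _ _ => 0) (fun _ => 0) (fun i j => a * y i * z j)
        (ζ * b) (fun _ => 0) 0 (fun j => a * b * z j)
        (fun _ => 0) (fun i j => b * w i * x j) (fun i => a * b * w i) (fun _ _ => 0) := by
  ext i j
  rcases i with (i|i)|(i|i) <;> rcases j with (j|j)|(j|j) <;>
    simp [blk] <;> field_simp <;> ring

end

theorem dsM_drazin_caseII {m n : ℕ} (a b : ℂ) (ha : a ≠ 0) (hb : b ≠ 0)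
    (x y : Fin m → ℂ) (z w : Fin n → ℂ)
    (hxy : dotT x y ≠ 0) (hzw : dotT z w = 0)
    (hζ : dotT x y + a * b ≠ 0) :
    letI ζ := dotT x y + a * b
    letI M := dsM a b x y z w
    letI D := ζ⁻¹ • blk 0 x a (fun _ => 0)
        y (fun _ _ => 0) (fun _ => 0) (fun i j => ζ⁻¹ * a * y i * z j)
        b (fun _ => 0) 0 (fun j => ζ⁻¹ * a * b * z j)
        (fun _ => 0) (fun i j => ζ⁻¹ * b * w i * x j)
          (fun i => ζ⁻¹ * a * b * w i) (fun _ _ => 0)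
    M ^ 4 * D = M ^ 3 ∧ D * M * D = D ∧ M * D = D * M := by
  have hζ0 := hζ
  set ζ : ℂ := dotT x y + a * b with hzd
  set M : Matrix (Idx m n) (Idx m n) ℂ := dsM a b x y z w with hM
  set BD : Matrix (Idx m n) (Idx m n) ℂ := blk 0 x a (fun _ => 0)
        y (fun _ _ => 0) (fun _ => 0) (fun i j => ζ⁻¹ * a * y i * z j)
        b (fun _ => 0) 0 (fun j => ζ⁻¹ * a * b * z j)
        (fun _ => 0) (fun i j => ζ⁻¹ * b * w i * x j)
          (fun i => ζ⁻¹ * a * b * w i) (fun _ _ => 0) with hBD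
  set D : Matrix (Idx m n) (Idx m n) ℂ := ζ⁻¹ • BD with hD
  have h1 : M * M = blk ζ (fun _ => 0) 0 (fun j => a * z j)
        (fun _ => 0) (fun i j => y i * x j) (fun i => a * y i) (fun _ _ => 0)
        0 (fun j => b * x j) (a * b) (fun _ => 0)
        (fun i => b * w i) (fun _ _ => 0) (fun _ => 0) (fun i j => w i * z j) :=
    L1 a b x y z w hzw
  have h2 : blk ζ (fun _ => 0) 0 (fun j => a * z j)
        (fun _ => 0) (fun i j => y i * x j) (fun i => a * y i) (fun _ _ => 0)
        0 (fun j => b * x j) (a * b) (fun _ => 0)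
        (fun i => b * w i) (fun _ _ => 0) (fun _ => 0) (fun i j => w i * z j)
      * M =
      blk 0 (fun j => ζ * x j) (ζ * a) (fun _ => 0)
        (fun i => ζ * y i) (fun _ _ => 0) (fun _ => 0) (fun i j => a * y i * z j)
        (ζ * b) (fun _ => 0) 0 (fun j => a * b * z j)
        (fun _ => 0) (fun i j => b * w i * x j) (fun i => a * b * w i) (fun _ _ => 0) :=
    L2 a b x y z w hzw
  have h5 : ζ • BD = blk 0 (fun j => ζ * x j) (ζ * a) (fun _ => 0)
        (fun i => ζ * y i) (fun _ _ => 0) (fun _ => 0) (fun i j => a * y i * z j)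
        (ζ * b) (fun _ => 0) 0 (fun j => a * b * z j)
        (fun _ => 0) (fun i j => b * w i * x j) (fun i => a * b * w i) (fun _ _ => 0) :=
    L5 a b x y z w hζ0
  have h3 : BD * M = blk ζ (fun _ => 0) 0 (fun j => a * z j)
        (fun _ => 0) (fun i j => y i * x j) (fun i => a * y i) (fun _ _ => 0)
        0 (fun j => b * x j) (a * b) (fun _ => 0)
        (fun i => b * w i) (fun _ _ => 0) (fun _ => 0)
          (fun i j => ζ⁻¹ * a * b * w i * z j) :=
    L3 a b x y z w hzw hζ0
  have h4 : blk ζ (fun _ => 0) 0 (fun j => a * z j)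
        (fun _ => 0) (fun i j => y i * x j) (fun i => a * y i) (fun _ _ => 0)
        0 (fun j => b * x j) (a * b) (fun _ => 0)
        (fun i => b * w i) (fun _ _ => 0) (fun _ => 0)
          (fun i j => ζ⁻¹ * a * b * w i * z j)
      * BD = ζ • BD :=
    L4 a b x y z w hzw hζ0
  -- key facts
  have hMMM : M * M * M = (ζ ^ 2) • D := by
    rw [h1, h2, ← h5, hD, smul_smul]
    congr 1
    field_simp
  have hDMD : D * M * D = D := by
    rw [hD, smul_mul_assoc, h3, smul_mul_assoc, mul_smul_comm, h4, smul_smul, smul_smul]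
    congr 1
    field_simp
  have hcomm : M * D = D * M := by
    have hDalt : D = (ζ ^ 2)⁻¹ • (M * M * M) := by
      rw [hMMM, inv_smul_smul₀ (pow_ne_zero 2 hζ0)]
    rw [hDalt, mul_smul_comm, smul_mul_assoc]
    congr 1
    noncomm_ring
  have hM3 : M ^ 3 = M * M * M := by
    rw [pow_succ, pow_succ, pow_one]
  have hM4 : M ^ 4 = M * M * M * M := by
    rw [pow_succ, hM3]
  refine ⟨?_, hDMD, hcomm⟩
  calc M ^ 4 * D = (M * M * M) * (M * D) := by rw [hM4, mul_assoc]
    _ = (M * M * M) * (D * M) := by rw [hcomm]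
    _ = ((M * M * M) * D) * M := by rw [← mul_assoc (M*M*M) D M]
    _ = ((ζ ^ 2) • (D * D)) * M := by rw [hMMM, smul_mul_assoc]
    _ = (ζ ^ 2) • (D * (D * M)) := by rw [smul_mul_assoc, mul_assoc]
    _ = (ζ ^ 2) • (D * (M * D)) := by rw [← hcomm]
    _ = (ζ ^ 2) • (D * M * D) := by rw [← mul_assoc D M D]
    _ = (ζ ^ 2) • D := by rw [hDMD]
    _ = M ^ 3 := by rw [← hMMM, hM3]
end

section
/- Let M = [[0, xᵀ, a, 0],[y, 0, 0, 0],[b, 0, 0, zᵀ],[0, 0, w, 0]] with a, b ≠ 0, x, y ∈ ℂᵐ, z, w ∈ ℂⁿ. If xᵀy ≠ 0, zᵀw = 0, and xᵀy + ab = 0, then M⁵ = 0, i.e. M is nilpotent of index at most 5; consequently the Drazin inverse of M is the zero matrix. -/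
open Matrix BigOperators

set_option maxHeartbeats 1000000 in
theorem dsM_nilpotent_caseIII {m n : ℕ} (a b : ℂ) (ha : a ≠ 0) (hb : b ≠ 0)
    (x y : Fin m → ℂ) (z w : Fin n → ℂ)
    (hxy : dotT x y ≠ 0) (hzw : dotT z w = 0)
    (hζ : dotT x y + a * b = 0) :
    (dsM a b x y z w) ^ 5 = 0 ∧
      ∀ D : Matrix (Idx m n) (Idx m n) ℂ,
        (dsM a b x y z w) ^ 6 * D = (dsM a b x y z w) ^ 5 →
        D * dsM a b x y z w * D = D →
        dsM a b x y z w * D = D * dsM a b x y z w → D = 0 := by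
  have hs : (∑ i, x i * y i) = -(a * b) := by
    have := hζ; simp [dotT] at this; linear_combination this
  have ht : (∑ i, z i * w i) = 0 := hzw
  set M := dsM a b x y z w with hM
  have h2 : M * M =
      blk 0 (fun _ => 0) 0 (fun k => a * z k)
        (fun _ => 0) (fun i k => y i * x k) (fun i => a * y i) (fun _ _ => 0)
        0 (fun k => b * x k) (a * b) (fun _ => 0)
        (fun i => w i * b) (fun _ _ => 0) (fun _ => 0) (fun i k => w i * z k) := by
    ext i j
    rcases i with (_ | i) | (_ | i) <;> rcases j with (_ | j) | (_ | j) <;>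
      simp [hM, dsM, blk, mul_apply, Fintype.sum_sum_type, hs, ht] <;> (try ring)
  have h3 : M * M * M =
      blk 0 (fun _ => 0) 0 (fun _ => 0)
        (fun _ => 0) (fun _ _ => 0) (fun _ => 0) (fun i k => a * y i * z k)
        0 (fun _ => 0) 0 (fun k => a * b * z k)
        (fun _ => 0) (fun i k => b * w i * x k) (fun i => a * b * w i) (fun _ _ => 0) := by
    rw [h2]
    ext i j
    rcases i with (_ | i) | (_ | i) <;> rcases j with (_ | j) | (_ | j) <;>
      simp [hM, dsM, blk, mul_apply, Fintype.sum_sum_type] <;>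
      (try simp [mul_assoc, ← Finset.mul_sum, hs, ht]) <;> (try ring) <;> (try tauto)
  have h4 : M * M * M * M =
      blk 0 (fun _ => 0) 0 (fun _ => 0)
        (fun _ => 0) (fun _ _ => 0) (fun _ => 0) (fun _ _ => 0)
        0 (fun _ => 0) 0 (fun _ => 0)
        (fun _ => 0) (fun _ _ => 0) (fun _ => 0) (fun i k => a * b * w i * z k) := by
    rw [h3]
    ext i j
    rcases i with (_ | i) | (_ | i) <;> rcases j with (_ | j) | (_ | j) <;>
      simp [hM, dsM, blk, mul_apply, Fintype.sum_sum_type] <;>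
      (try simp [mul_assoc, ← Finset.mul_sum, hs, ht]) <;> (try ring) <;> (try tauto)
  have h5 : M ^ 5 = 0 := by
    have h : M ^ 5 = M * M * M * M * M := by
      rw [pow_succ, pow_succ, pow_succ, pow_succ, pow_one]
    rw [h, h4]
    ext i j
    rcases i with (_ | i) | (_ | i) <;> rcases j with (_ | j) | (_ | j) <;>
      simp [hM, dsM, blk, mul_apply, Fintype.sum_sum_type] <;>
      (try simp [mul_assoc, ← Finset.mul_sum, hs, ht]) <;> (try ring) <;> (try tauto)
  refine ⟨h5, fun D _ hDMD hcom => ?_⟩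
  have hbase : D = D ^ 2 * M := by
    calc D = D * M * D := hDMD.symm
    _ = D * (M * D) := by rw [mul_assoc]
    _ = D * (D * M) := by rw [hcom]
    _ = D ^ 2 * M := by rw [← mul_assoc, ← pow_two]
  have key : ∀ k : ℕ, D = D ^ (k + 1) * M ^ k := by
    intro k
    induction k with
    | zero => simpa using hbase.symm ▸ by simp
    | succ k ih =>
      have hstep : D ^ (k + 1) = D ^ (k + 2) * M := by
        calc D ^ (k + 1) = D ^ k * D := pow_succ D k
        _ = D ^ k * (D ^ 2 * M) := congrArg (fun t => D ^ k * t) hbase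
        _ = D ^ k * D ^ 2 * M := by rw [← mul_assoc]
        _ = D ^ (k + 2) * M := by rw [← pow_add]
      calc D = D ^ (k + 1) * M ^ k := ih
      _ = D ^ (k + 2) * M * M ^ k := by rw [hstep]
      _ = D ^ (k + 2) * (M * M ^ k) := by rw [mul_assoc]
      _ = D ^ (k + 1 + 1) * M ^ (k + 1) := by rw [← pow_succ']
  have hfin := key 5
  rw [h5, mul_zero] at hfin
  exact hfin
end

section
/- Let M = [[0, xᵀ, a, 0],[y, 0, 0, 0],[b, 0, 0, zᵀ],[0, 0, w, 0]] with a, b ∈ ℂ nonzero, x, y ∈ ℂᵐ, z, w ∈ ℂⁿ. Set s = x*x, u = y*y, t = z*z, v = w*w. If s, u, t, v are all nonzero, then N = [[0, u⁻¹y*, 0, 0],[s⁻¹ x̄, 0, 0, -s⁻¹ a v⁻¹ x̄ w*],[0, 0, 0, v⁻¹ w*],[0, -t⁻¹ b u⁻¹ z̄ y*, t⁻¹ z̄, 0]] is the Moore–Penrose inverse of M: MNM = M, NMN = N, (MN)* = MN, (NM)* = NM. -/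
/-!
`MN` and `NM` are block diagonal: the identity on the two centres, and on the leaves the orthogonal
projections `P = diag(yy*/u, ww*/v)` and `Q = diag(x̄xᵀ/s, z̄zᵀ/t)`. These are Hermitian; `P` fixes the
columns `y`, `w` of `M`, and `NP = N` because on the leaves every row of `N` is a multiple of `y*`
or `w*`. Hence `MNM = PM = M` and `NMN = NP = N`.
-/

open Matrix BigOperators

open ComplexConjugate

lemma penrose_of_mul_eq_of_isHermitian {ι R : Type*} [Fintype ι] [NonUnitalSemiring R] [Star R]
    {M N P Q : Matrix ι ι R} (hMN : M * N = P) (hNM : N * M = Q)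
    (hPM : P * M = M) (hNP : N * P = N) (hP : P.IsHermitian) (hQ : Q.IsHermitian) :
    M * N * M = M ∧ N * M * N = N ∧ (M * N)ᴴ = M * N ∧ (N * M)ᴴ = N * M := by
  refine ⟨?_, ?_, ?_, ?_⟩
  · rw [hMN, hPM]
  · rw [Matrix.mul_assoc, hMN, hNP]
  · rw [hMN, hP]
  · rw [hNM, hQ]

section Gram

variable {k : ℕ} (v : Fin k → ℂ)

lemma gram_eq_star_dotProduct : gram v = star v ⬝ᵥ v := rfl

lemma star_gram : star (gram v) = gram v := by
  simp [_root_.gram, mul_comm]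

lemma gram_star : gram (star v) = gram v := by
  simp [_root_.gram, mul_comm]

lemma sum_mul_conj_mul_self (c : ℂ) : ∑ i, c * conj (v i) * v i = c * gram v := by
  simp only [_root_.gram, Finset.mul_sum, mul_assoc, Complex.star_def]

lemma sum_self_mul_mul_conj (c : ℂ) : ∑ i, v i * (c * conj (v i)) = c * gram v := by
  simp only [_root_.gram, Finset.mul_sum, Complex.star_def]
  exact Finset.sum_congr rfl fun i _ => by ring

lemma sum_self_mul_mul_conj_mul (c d : ℂ) :
    ∑ i, v i * (c * conj (v i) * d) = c * gram v * d := by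
  simp only [_root_.gram, Finset.mul_sum, Finset.sum_mul, Complex.star_def]
  exact Finset.sum_congr rfl fun i _ => by ring

end Gram

noncomputable def rankOneProj {k : ℕ} (v : Fin k → ℂ) : Matrix (Fin k) (Fin k) ℂ :=
  (gram v)⁻¹ • vecMulVec v (star v)

section RankOneProj

variable {k : ℕ} {v : Fin k → ℂ}

lemma isHermitian_rankOneProj (v : Fin k → ℂ) : (rankOneProj v).IsHermitian := by
  rw [IsHermitian, rankOneProj, conjTranspose_smul, conjTranspose_vecMulVec, star_inv₀, star_gram,
    star_star]

lemma rankOneProj_mulVec_self (hv : gram v ≠ 0) : rankOneProj v *ᵥ v = v := by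
  rw [rankOneProj, smul_mulVec, vecMulVec_mulVec, ← gram_eq_star_dotProduct, op_smul_eq_smul,
    inv_smul_smul₀ hv]

lemma smul_star_vecMul_rankOneProj (hv : gram v ≠ 0) (c : ℂ) :
    (c • star v) ᵥ* rankOneProj v = c • star v := by
  rw [smul_vecMul, rankOneProj, vecMul_smul, vecMul_vecMulVec, ← gram_eq_star_dotProduct,
    inv_smul_smul₀ hv]

end RankOneProj

def blkDiag {m n : ℕ} (P : Matrix (Fin m) (Fin m) ℂ) (Q : Matrix (Fin n) (Fin n) ℂ) :
    Matrix (Idx m n) (Idx m n) ℂ :=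
  blk 1 (fun _ => 0) 0 (fun _ => 0)
    (fun _ => 0) P (fun _ => 0) (fun _ _ => 0)
    0 (fun _ => 0) 1 (fun _ => 0)
    (fun _ => 0) (fun _ _ => 0) (fun _ => 0) Q

lemma isHermitian_blkDiag {m n : ℕ} {P : Matrix (Fin m) (Fin m) ℂ} {Q : Matrix (Fin n) (Fin n) ℂ}
    (hP : P.IsHermitian) (hQ : Q.IsHermitian) : (blkDiag P Q).IsHermitian := by
  ext ((i|i)|(i|i)) ((j|j)|(j|j)) <;> simp [blkDiag, blk, conjTranspose_apply]
  · exact congrFun₂ hP i j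
  · exact congrFun₂ hQ i j

noncomputable def dsN {m n : ℕ} (a b : ℂ) (x y : Fin m → ℂ) (z w : Fin n → ℂ) :
    Matrix (Idx m n) (Idx m n) ℂ :=
  blk 0 (fun i => (gram y)⁻¹ * star (y i)) 0 (fun _ => 0)
        (fun i => (gram x)⁻¹ * star (x i)) (fun _ _ => 0) (fun _ => 0)
          (fun i j => -((gram x)⁻¹ * a * (gram w)⁻¹) * star (x i) * star (w j))
        0 (fun _ => 0) 0 (fun j => (gram w)⁻¹ * star (w j))
        (fun _ => 0) (fun i j => -((gram z)⁻¹ * b * (gram y)⁻¹) * star (z i) * star (y j))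
          (fun i => (gram z)⁻¹ * star (z i)) (fun _ _ => 0)

section DoubleStar

variable {m n : ℕ} (a b : ℂ) (x y : Fin m → ℂ) (z w : Fin n → ℂ)

lemma dsM_mul_dsN (hs : gram x ≠ 0) (ht : gram z ≠ 0) :
    dsM a b x y z w * dsN a b x y z w = blkDiag (rankOneProj y) (rankOneProj w) := by
  ext ((i|i)|(i|i)) ((j|j)|(j|j)) <;>
    simp [dsM, dsN, blkDiag, rankOneProj, blk, mul_apply, Fintype.sum_sum_type,
      sum_self_mul_mul_conj, sum_self_mul_mul_conj_mul, vecMulVec_apply] <;> field_simp <;> ring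

lemma dsN_mul_dsM (hu : gram y ≠ 0) (hv : gram w ≠ 0) :
    dsN a b x y z w * dsM a b x y z w = blkDiag (rankOneProj (star x)) (rankOneProj (star z)) := by
  ext ((i|i)|(i|i)) ((j|j)|(j|j)) <;>
    simp [dsM, dsN, blkDiag, rankOneProj, blk, mul_apply, Fintype.sum_sum_type, gram_star,
      sum_mul_conj_mul_self, vecMulVec_apply] <;> field_simp <;> ring

lemma blkDiag_rankOneProj_mul_dsM (hu : gram y ≠ 0) (hv : gram w ≠ 0) :
    blkDiag (rankOneProj y) (rankOneProj w) * dsM a b x y z w = dsM a b x y z w := by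
  ext ((i|i)|(i|i)) ((j|j)|(j|j)) <;> simp [dsM, blkDiag, blk, mul_apply, Fintype.sum_sum_type]
  · exact congrFun (rankOneProj_mulVec_self hu) i
  · exact congrFun (rankOneProj_mulVec_self hv) i

lemma dsN_mul_blkDiag_rankOneProj (hu : gram y ≠ 0) (hv : gram w ≠ 0) :
    dsN a b x y z w * blkDiag (rankOneProj y) (rankOneProj w) = dsN a b x y z w := by
  ext ((i|i)|(i|i)) ((j|j)|(j|j)) <;> simp [dsN, blkDiag, blk, mul_apply, Fintype.sum_sum_type]
  · exact congrFun (smul_star_vecMul_rankOneProj hu _) j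
  · exact congrFun (smul_star_vecMul_rankOneProj hv _) j
  · exact congrFun (smul_star_vecMul_rankOneProj hv _) j
  · exact congrFun (smul_star_vecMul_rankOneProj hu _) j

end DoubleStar

theorem dsM_moore_penrose_general {m n : ℕ} (a b : ℂ)
    (x y : Fin m → ℂ) (z w : Fin n → ℂ)
    (hs : gram x ≠ 0) (hu : gram y ≠ 0) (ht : gram z ≠ 0) (hv : gram w ≠ 0) :
    letI M := dsM a b x y z w
    letI N := blk 0 (fun i => (gram y)⁻¹ * star (y i)) 0 (fun _ => 0)
        (fun i => (gram x)⁻¹ * star (x i)) (fun _ _ => 0) (fun _ => 0)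
          (fun i j => -((gram x)⁻¹ * a * (gram w)⁻¹) * star (x i) * star (w j))
        0 (fun _ => 0) 0 (fun j => (gram w)⁻¹ * star (w j))
        (fun _ => 0) (fun i j => -((gram z)⁻¹ * b * (gram y)⁻¹) * star (z i) * star (y j))
          (fun i => (gram z)⁻¹ * star (z i)) (fun _ _ => 0)
    M * N * M = M ∧ N * M * N = N ∧ (M * N)ᴴ = M * N ∧ (N * M)ᴴ = N * M := by
  exact penrose_of_mul_eq_of_isHermitian
    (dsM_mul_dsN a b x y z w hs ht) (dsN_mul_dsM a b x y z w hu hv)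
    (blkDiag_rankOneProj_mul_dsM a b x y z w hu hv) (dsN_mul_blkDiag_rankOneProj a b x y z w hu hv)
    (isHermitian_blkDiag (isHermitian_rankOneProj y) (isHermitian_rankOneProj w))
    (isHermitian_blkDiag (isHermitian_rankOneProj (star x)) (isHermitian_rankOneProj (star z)))

theorem dsM_moore_penrose {m n : ℕ} (a b : ℂ) (ha : a ≠ 0) (hb : b ≠ 0)
    (x y : Fin m → ℂ) (z w : Fin n → ℂ)
    (hs : gram x ≠ 0) (hu : gram y ≠ 0) (ht : gram z ≠ 0) (hv : gram w ≠ 0) :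
    letI M := dsM a b x y z w
    letI N := blk 0 (fun i => (gram y)⁻¹ * star (y i)) 0 (fun _ => 0)
        (fun i => (gram x)⁻¹ * star (x i)) (fun _ _ => 0) (fun _ => 0)
          (fun i j => -((gram x)⁻¹ * a * (gram w)⁻¹) * star (x i) * star (w j))
        0 (fun _ => 0) 0 (fun j => (gram w)⁻¹ * star (w j))
        (fun _ => 0) (fun i j => -((gram z)⁻¹ * b * (gram y)⁻¹) * star (z i) * star (y j))
          (fun i => (gram z)⁻¹ * star (z i)) (fun _ _ => 0)
    M * N * M = M ∧ N * M * N = N ∧ (M * N)ᴴ = M * N ∧ (N * M)ᴴ = N * M :=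
  dsM_moore_penrose_general a b x y z w hs hu ht hv
end

section
/- Let M be the double star block matrix with xᵀy = 0 = zᵀw and a, b ≠ 0, and suppose p := bb̄ + z*z ≠ 0 and q := aā + x*x ≠ 0. Then X = [[0, b̄(ap)⁻¹xᵀ, b̄p⁻¹, 0],[q⁻¹x̄, 0, 0, (bq)⁻¹x̄zᵀ],[āq⁻¹, 0, 0, ā(bq)⁻¹zᵀ],[0, (ap)⁻¹z̄xᵀ, p⁻¹z̄, 0]] is the dual core EP inverse of M: it satisfies M³X = M², X²M = X, and (XM)* = XM. -/
open Matrix BigOperators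

/-!
Put `u = (b̄, 0, 0, z̄)` and `v = (0, x̄, ā, 0)`, so that `uᴴu = p`, `vᴴv = q` and `uᴴv = 0`.
The relations `xᵀy = 0 = zᵀw` say exactly that `uᴴM = b vᴴ`, `vᴴM = a uᴴ`, and that every row
of `M²` lies in the span of `uᴴ` and `vᴴ`. The proposed `X` is `(ap)⁻¹ u vᴴ + (bq)⁻¹ v uᴴ`, hence
`XM = p⁻¹ u uᴴ + q⁻¹ v vᴴ` is the orthogonal projection onto the span of `u` and `v`: it is
Hermitian, `X (XM) = X` since the rows of `X` lie in the span of `uᴴ, vᴴ`, and `MX` fixes the row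
vectors `uᴴ` and `vᴴ`, which gives `M³X = M²`.
-/

namespace Matrix

variable {K ι : Type*} [Field K] [StarRing K] [Fintype ι]

def swapInverse (a b : K) (u v : ι → K) : Matrix ι ι K :=
  (a * (star u ⬝ᵥ u))⁻¹ • vecMulVec u (star v) + (b * (star v ⬝ᵥ v))⁻¹ • vecMulVec v (star u)

def pairProj (u v : ι → K) : Matrix ι ι K :=
  (star u ⬝ᵥ u)⁻¹ • vecMulVec u (star u) + (star v ⬝ᵥ v)⁻¹ • vecMulVec v (star v)

variable {M : Matrix ι ι K} {u v : ι → K} {a b : K}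

lemma conjTranspose_pairProj (u v : ι → K) : (pairProj u v)ᴴ = pairProj u v := by
  have hself (w : ι → K) : star (star w ⬝ᵥ w) = star w ⬝ᵥ w := (star_dotProduct w w).symm
  simp [pairProj, conjTranspose_add, conjTranspose_smul, star_inv₀, hself]

lemma star_vecMul_pairProj_left (hu : star u ⬝ᵥ u ≠ 0) (huv : star u ⬝ᵥ v = 0) :
    star u ᵥ* pairProj u v = star u := by
  simp [pairProj, vecMul_add, vecMul_smul, vecMul_vecMulVec, huv, hu]

lemma star_vecMul_pairProj_right (hv : star v ⬝ᵥ v ≠ 0) (huv : star u ⬝ᵥ v = 0) :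
    star v ᵥ* pairProj u v = star v := by
  have hvu : star v ⬝ᵥ u = 0 := by rw [star_dotProduct, huv, star_zero]
  simp [pairProj, vecMul_add, vecMul_smul, vecMul_vecMulVec, hvu, hv]

lemma swapInverse_mul_pairProj (hu : star u ⬝ᵥ u ≠ 0) (hv : star v ⬝ᵥ v ≠ 0)
    (huv : star u ⬝ᵥ v = 0) :
    swapInverse a b u v * pairProj u v = swapInverse a b u v := by
  simp only [swapInverse, add_mul, smul_mul, vecMulVec_mul, star_vecMul_pairProj_left hu huv,
    star_vecMul_pairProj_right hv huv]

lemma swapInverse_mul (ha : a ≠ 0) (hb : b ≠ 0)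
    (huM : star u ᵥ* M = b • star v) (hvM : star v ᵥ* M = a • star u) :
    swapInverse a b u v * M = pairProj u v := by
  simp [swapInverse, pairProj, add_mul, vecMulVec_mul, huM, hvM, vecMulVec_smul, smul_smul, ha, hb]

lemma star_vecMul_mul_swapInverse_left (hb : b ≠ 0) (hv : star v ⬝ᵥ v ≠ 0)
    (huv : star u ⬝ᵥ v = 0) (huM : star u ᵥ* M = b • star v) :
    star u ᵥ* (M * swapInverse a b u v) = star u := by
  have hvu : star v ⬝ᵥ u = 0 := by rw [star_dotProduct, huv, star_zero]
  simp [← vecMul_vecMul, huM, swapInverse, vecMul_add, vecMul_smul, vecMul_vecMulVec, hvu,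
    smul_smul]
  match_scalars
  field_simp

lemma star_vecMul_mul_swapInverse_right (ha : a ≠ 0) (hu : star u ⬝ᵥ u ≠ 0)
    (huv : star u ⬝ᵥ v = 0) (hvM : star v ᵥ* M = a • star u) :
    star v ᵥ* (M * swapInverse a b u v) = star v := by
  simp [← vecMul_vecMul, hvM, swapInverse, vecMul_add, vecMul_smul, vecMul_vecMulVec, huv,
    smul_smul]
  match_scalars
  field_simp

variable [DecidableEq ι]

def IsDualCoreEPInverse (M X : Matrix ι ι K) (k : ℕ) : Prop :=
  M ^ (k + 1) * X = M ^ k ∧ X ^ 2 * M = X ∧ (X * M)ᴴ = X * M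

theorem isDualCoreEPInverse_swapInverse (ha : a ≠ 0) (hb : b ≠ 0) (hu : star u ⬝ᵥ u ≠ 0)
    (hv : star v ⬝ᵥ v ≠ 0) (huv : star u ⬝ᵥ v = 0)
    (huM : star u ᵥ* M = b • star v) (hvM : star v ᵥ* M = a • star u)
    (hM2 : ∃ c d : ι → K, M ^ 2 = vecMulVec c (star u) + vecMulVec d (star v)) :
    IsDualCoreEPInverse M (swapInverse a b u v) 2 := by
  have hXM := swapInverse_mul ha hb huM hvM
  obtain ⟨c, d, hcd⟩ := hM2
  refine ⟨?_, ?_, ?_⟩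
  · rw [pow_succ, Matrix.mul_assoc, hcd, add_mul, vecMulVec_mul, vecMulVec_mul,
      star_vecMul_mul_swapInverse_left hb hv huv huM,
      star_vecMul_mul_swapInverse_right ha hu huv hvM]
  · rw [sq, Matrix.mul_assoc, hXM, swapInverse_mul_pairProj hu hv huv]
  · rw [hXM, conjTranspose_pairProj]

end Matrix

section DoubleStar

variable {m n : ℕ}

def blkVec (c₁ : ℂ) (v₂ : Fin m → ℂ) (c₃ : ℂ) (v₄ : Fin n → ℂ) : Idx m n → ℂ :=
  Sum.elim (Sum.elim (fun _ => c₁) v₂) (Sum.elim (fun _ => c₃) v₄)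

lemma star_blkVec (c₁ : ℂ) (v₂ : Fin m → ℂ) (c₃ : ℂ) (v₄ : Fin n → ℂ) :
    star (blkVec c₁ v₂ c₃ v₄) = blkVec (star c₁) (star v₂) (star c₃) (star v₄) := by
  funext i
  rcases i with (i | i) | (i | i) <;> rfl

lemma blkVec_dotProduct (c₁ : ℂ) (v₂ : Fin m → ℂ) (c₃ : ℂ) (v₄ : Fin n → ℂ)
    (d₁ : ℂ) (w₂ : Fin m → ℂ) (d₃ : ℂ) (w₄ : Fin n → ℂ) :
    blkVec c₁ v₂ c₃ v₄ ⬝ᵥ blkVec d₁ w₂ d₃ w₄ = c₁ * d₁ + v₂ ⬝ᵥ w₂ + c₃ * d₃ + v₄ ⬝ᵥ w₄ := by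
  simp [dotProduct, Fintype.sum_sum_type, blkVec, add_assoc]

lemma dsM_eq_sum_vecMulVec (a b : ℂ) (x y : Fin m → ℂ) (z w : Fin n → ℂ) :
    dsM a b x y z w =
      vecMulVec (blkVec 1 0 0 0) (blkVec 0 x a 0) + vecMulVec (blkVec 0 0 1 0) (blkVec b 0 0 z) +
        vecMulVec (blkVec 0 y 0 0) (blkVec 1 0 0 0) +
          vecMulVec (blkVec 0 0 0 w) (blkVec 0 0 1 0) := by
  ext i j
  rcases i with (i | i) | (i | i) <;> rcases j with (j | j) | (j | j) <;>
    simp [vecMulVec_apply, blkVec, dsM, blk]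

def dsU (b : ℂ) (z : Fin n → ℂ) : Idx m n → ℂ := blkVec (star b) 0 0 (star z)

def dsV (a : ℂ) (x : Fin m → ℂ) : Idx m n → ℂ := blkVec 0 (star x) (star a) 0

lemma star_dsU (b : ℂ) (z : Fin n → ℂ) : star (dsU (m := m) b z) = blkVec b 0 0 z := by
  simp [dsU, star_blkVec]

lemma star_dsV (a : ℂ) (x : Fin m → ℂ) : star (dsV (n := n) a x) = blkVec 0 x a 0 := by
  simp [dsV, star_blkVec]

lemma star_dsU_dotProduct_self (b : ℂ) (z : Fin n → ℂ) :
    star (dsU (m := m) b z) ⬝ᵥ dsU b z = b * star b + gram z := by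
  rw [star_dsU, dsU, blkVec_dotProduct]
  simp [_root_.gram, dotProduct, mul_comm]

lemma star_dsV_dotProduct_self (a : ℂ) (x : Fin m → ℂ) :
    star (dsV (n := n) a x) ⬝ᵥ dsV a x = a * star a + gram x := by
  rw [star_dsV, dsV, blkVec_dotProduct]
  simp [_root_.gram, dotProduct, mul_comm, add_comm]

lemma star_dsU_dotProduct_dsV (a b : ℂ) (x : Fin m → ℂ) (z : Fin n → ℂ) :
    star (dsU b z) ⬝ᵥ dsV a x = 0 := by
  simp [star_dsU, dsV, blkVec_dotProduct]

variable {a b : ℂ} {x y : Fin m → ℂ} {z w : Fin n → ℂ}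

lemma blkVec_vecMul_dsM (c₁ : ℂ) (v₂ : Fin m → ℂ) (c₃ : ℂ) (v₄ : Fin n → ℂ) :
    blkVec c₁ v₂ c₃ v₄ ᵥ* dsM a b x y z w =
      c₁ • blkVec 0 x a 0 + c₃ • blkVec b 0 0 z + (v₂ ⬝ᵥ y) • blkVec 1 0 0 0 +
        (v₄ ⬝ᵥ w) • blkVec 0 0 1 0 := by
  simp [dsM_eq_sum_vecMulVec, vecMul_add, vecMul_vecMulVec, blkVec_dotProduct]

lemma star_dsU_vecMul_dsM (hzw : dotT z w = 0) :
    star (dsU b z) ᵥ* dsM a b x y z w = b • star (dsV a x) := by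
  rw [star_dsU, star_dsV, blkVec_vecMul_dsM]
  simp [show z ⬝ᵥ w = 0 from hzw]

lemma star_dsV_vecMul_dsM (hxy : dotT x y = 0) :
    star (dsV a x) ᵥ* dsM a b x y z w = a • star (dsU b z) := by
  rw [star_dsU, star_dsV, blkVec_vecMul_dsM]
  simp [show x ⬝ᵥ y = 0 from hxy]

lemma dsM_sq_s13 (hxy : dotT x y = 0) (hzw : dotT z w = 0) :
    dsM a b x y z w ^ 2 =
      vecMulVec (a • blkVec 1 0 0 0 + blkVec 0 0 0 w) (star (dsU b z)) +
        vecMulVec (b • blkVec 0 0 1 0 + blkVec 0 y 0 0) (star (dsV a x)) := by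
  rw [sq]
  conv_lhs => enter [1]; rw [dsM_eq_sum_vecMulVec]
  simp only [add_mul, vecMulVec_mul, blkVec_vecMul_dsM]
  simp [star_dsU, star_dsV, show x ⬝ᵥ y = 0 from hxy, show z ⬝ᵥ w = 0 from hzw, add_vecMulVec,
    smul_vecMulVec]
  abel

lemma swapInverse_dsU_dsV (ha : a ≠ 0) (hb : b ≠ 0) :
    swapInverse a b (dsU b z) (dsV a x) =
      blk 0 (fun j => star b * (a * (b * star b + gram z))⁻¹ * x j)
        (star b * (b * star b + gram z)⁻¹) (fun _ => 0)
        (fun i => (a * star a + gram x)⁻¹ * star (x i)) (fun _ _ => 0) (fun _ => 0)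
          (fun i j => (b * (a * star a + gram x))⁻¹ * star (x i) * z j)
        (star a * (a * star a + gram x)⁻¹) (fun _ => 0) 0
          (fun j => star a * (b * (a * star a + gram x))⁻¹ * z j)
        (fun _ => 0) (fun i j => (a * (b * star b + gram z))⁻¹ * star (z i) * x j)
          (fun i => (b * star b + gram z)⁻¹ * star (z i)) (fun _ _ => 0) := by
  rw [swapInverse, star_dsU_dotProduct_self, star_dsV_dotProduct_self, star_dsU, star_dsV]
  ext i j
  rcases i with (i | i) | (i | i) <;> rcases j with (j | j) | (j | j) <;>
    simp [blk, vecMulVec_apply, blkVec, dsU, dsV] <;> field_simp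

end DoubleStar

theorem dsM_dualCoreEP_caseI {m n : ℕ} (a b : ℂ) (ha : a ≠ 0) (hb : b ≠ 0)
    (x y : Fin m → ℂ) (z w : Fin n → ℂ)
    (hxy : dotT x y = 0) (hzw : dotT z w = 0)
    (hp : b * star b + gram z ≠ 0) (hq : a * star a + gram x ≠ 0) :
    letI M := dsM a b x y z w
    letI p := b * star b + gram z
    letI q := a * star a + gram x
    letI X := blk 0 (fun j => star b * (a * p)⁻¹ * x j) (star b * p⁻¹) (fun _ => 0)
        (fun i => q⁻¹ * star (x i)) (fun _ _ => 0) (fun _ => 0)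
          (fun i j => (b * q)⁻¹ * star (x i) * z j)
        (star a * q⁻¹) (fun _ => 0) 0 (fun j => star a * (b * q)⁻¹ * z j)
        (fun _ => 0) (fun i j => (a * p)⁻¹ * star (z i) * x j)
          (fun i => p⁻¹ * star (z i)) (fun _ _ => 0)
    M ^ 3 * X = M ^ 2 ∧ X ^ 2 * M = X ∧ (X * M)ᴴ = X * M := by
  rw [← swapInverse_dsU_dsV ha hb]
  exact isDualCoreEPInverse_swapInverse ha hb
    (by rwa [star_dsU_dotProduct_self]) (by rwa [star_dsV_dotProduct_self])
    (star_dsU_dotProduct_dsV a b x z) (star_dsU_vecMul_dsM hzw) (star_dsV_vecMul_dsM hxy)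
    ⟨_, _, dsM_sq_s13 hxy hzw⟩
end

section
/- Let M be the double star block matrix with xᵀy ≠ 0, zᵀw = 0, a, b ≠ 0 and ζ := xᵀy + ab ≠ 0. Then M³ = [[0, ζxᵀ, aζ, 0],[ζy, 0, 0, ayzᵀ],[ζb, 0, 0, abzᵀ],[0, bwxᵀ, abw, 0]]. -/
open Matrix BigOperators

set_option maxHeartbeats 1000000 in
theorem dsM_cube_caseII {m n : ℕ} (a b : ℂ) (ha : a ≠ 0) (hb : b ≠ 0)
    (x y : Fin m → ℂ) (z w : Fin n → ℂ)
    (hxy : dotT x y ≠ 0) (hzw : dotT z w = 0)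
    (hζ : dotT x y + a * b ≠ 0) :
    letI ζ := dotT x y + a * b
    (dsM a b x y z w) ^ 3 =
      blk 0 (fun j => ζ * x j) (a * ζ) (fun _ => 0)
        (fun i => ζ * y i) (fun _ _ => 0) (fun _ => 0) (fun i j => a * y i * z j)
        (ζ * b) (fun _ => 0) 0 (fun j => a * b * z j)
        (fun _ => 0) (fun i j => b * w i * x j) (fun i => a * b * w i) (fun _ _ => 0) := by
  have hzw' : ∑ i, z i * w i = 0 := hzw
  have hsq : (dsM a b x y z w) * (dsM a b x y z w) =
      blk (dotT x y + a * b) (fun _ => 0) 0 (fun j => a * z j)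
        (fun _ => 0) (fun i j => y i * x j) (fun i => y i * a) (fun _ _ => 0)
        0 (fun j => b * x j) (b * a) (fun _ => 0)
        (fun i => w i * b) (fun _ _ => 0) (fun _ => 0) (fun i j => w i * z j) := by
    ext i j
    rcases i with (i|i)|(i|i) <;> rcases j with (j|j)|(j|j) <;>
      simp [dsM, blk, dotT, Matrix.mul_apply, Fintype.sum_sum_type, hzw']
  have h3 : (dsM a b x y z w) ^ 3 =
      ((dsM a b x y z w) * (dsM a b x y z w)) * (dsM a b x y z w) := by
    rw [pow_succ, pow_two]
  rw [h3, hsq]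
  ext i j
  rcases i with (i|i)|(i|i) <;> rcases j with (j|j)|(j|j) <;>
    simp [dsM, blk, dotT, Matrix.mul_apply, Fintype.sum_sum_type, mul_assoc,
      ← Finset.mul_sum, hzw'] <;> ring
end

section
/- Let A be a complex square matrix admitting both a Moore–Penrose inverse A† and a core EP inverse A^⊕. Then X = A† A A^⊕ satisfies XAX = X, AX = A A^⊕, and XA = A† A A^⊕ A; moreover X is the unique matrix satisfying these three equations. -/
open Matrix

theorem mpcep_inverse_characterization {k : ℕ} (A Ad Ac : Matrix (Fin k) (Fin k) ℂ)
    (hAd1 : A * Ad * A = A) (hAd2 : Ad * A * Ad = Ad)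
    (hAd3 : (A * Ad)ᴴ = A * Ad) (hAd4 : (Ad * A)ᴴ = Ad * A)
    (hAc1 : ∃ m : ℕ, Ac * A ^ (m + 1) = A ^ m)
    (hAc2 : A * Ac ^ 2 = Ac) (hAc3 : (A * Ac)ᴴ = A * Ac) :
    ((Ad * A * Ac) * A * (Ad * A * Ac) = Ad * A * Ac ∧
      A * (Ad * A * Ac) = A * Ac ∧
      (Ad * A * Ac) * A = Ad * A * Ac * A) ∧
    ∀ X : Matrix (Fin k) (Fin k) ℂ,
      (X * A * X = X ∧ A * X = A * Ac ∧ X * A = Ad * A * Ac * A) →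
        X = Ad * A * Ac := by
  -- key: Ac = A^j * Ac^(j+1) for all j
  have hrep : ∀ j : ℕ, A ^ j * Ac ^ (j + 1) = Ac := by
    intro j
    induction j with
    | zero => simp
    | succ n ih =>
      calc A ^ (n + 1) * Ac ^ (n + 2)
          = A ^ n * (A * Ac ^ 2) * Ac ^ n := by
            rw [pow_succ A n, show n + 2 = 2 + n from by omega, pow_add]
            noncomm_ring
        _ = A ^ n * Ac ^ (n + 1) := by rw [hAc2, pow_succ' Ac n, mul_assoc]
        _ = Ac := ih
  obtain ⟨m, hm⟩ := hAc1
  have hAcAAc : Ac * A * Ac = Ac := by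
    calc Ac * A * Ac
        = Ac * A * (A ^ m * Ac ^ (m + 1)) := by rw [hrep m]
      _
        = Ac * A ^ (m + 1) * Ac ^ (m + 1) := by
          rw [pow_succ' A m]; noncomm_ring
      _ = A ^ m * Ac ^ (m + 1) := by rw [hm]
      _ = Ac := hrep m
  have hAX : A * (Ad * A * Ac) = A * Ac := by
    rw [← mul_assoc, ← mul_assoc, hAd1]
  refine ⟨⟨?_, hAX, rfl⟩, ?_⟩
  · calc Ad * A * Ac * A * (Ad * A * Ac)
        = Ad * A * Ac * (A * (Ad * A * Ac)) := by noncomm_ring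
      _ = Ad * A * (Ac * A * Ac) := by rw [hAX]; noncomm_ring
      _ = Ad * A * Ac := by rw [hAcAAc]
  · rintro X ⟨h1, h2, h3⟩
    calc X = X * A * X := h1.symm
      _ = Ad * A * Ac * A * X := by rw [h3]
      _ = Ad * A * Ac * (A * X) := by noncomm_ring
      _ = Ad * A * (Ac * A * Ac) := by rw [h2]; noncomm_ring
      _ = Ad * A * Ac := by rw [hAcAAc]
end

section
/- Let M be the double star block matrix with xᵀy = 0 = zᵀw, a, b ≠ 0, and suppose s = x*x, u = y*y, t = z*z, v = w*w, r = aā + w*w, h = bb̄ + y*y are all nonzero. Then the MPCEP inverse M†M M^⊕ equals [[0, h⁻¹y*, b̄h⁻¹, 0],[0, 0, 0, 0],[ār⁻¹, 0, 0, r⁻¹w*],[0, 0, 0, 0]]. -/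
open Matrix BigOperators

lemma step1 {m n : ℕ} (a b : ℂ)
    (x y : Fin m → ℂ) (z w : Fin n → ℂ)
    (hs : gram x ≠ 0) (hu : gram y ≠ 0) (ht : gram z ≠ 0) (hv : gram w ≠ 0) :
    blk 0 (fun i => (gram y)⁻¹ * star (y i)) 0 (fun _ => 0)
        (fun i => (gram x)⁻¹ * star (x i)) (fun _ _ => 0) (fun _ => 0)
          (fun i j => -((gram x)⁻¹ * a * (gram w)⁻¹) * star (x i) * star (w j))
        0 (fun _ => 0) 0 (fun j => (gram w)⁻¹ * star (w j))
        (fun _ => 0) (fun i j => -((gram z)⁻¹ * b * (gram y)⁻¹) * star (z i) * star (y j))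
          (fun i => (gram z)⁻¹ * star (z i)) (fun _ _ => 0)
      * dsM a b x y z w =
    blk 1 (fun _ => 0) 0 (fun _ => 0)
        (fun _ => 0) (fun i j => (gram x)⁻¹ * star (x i) * x j) (fun _ => 0) (fun _ _ => 0)
        0 (fun _ => 0) 1 (fun _ => 0)
        (fun _ => 0) (fun _ _ => 0) (fun _ => 0)
          (fun i j => (gram z)⁻¹ * star (z i) * z j) := by
  have key : ∀ {k : ℕ} (v : Fin k → ℂ), ∑ i, star (v i) * v i = gram v := fun v => rfl
  ext i j
  rcases i with (i|i)|(i|i) <;> rcases j with (j|j)|(j|j) <;>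
    simp only [Matrix.mul_apply, Fintype.sum_sum_type, blk, dsM, Matrix.of_apply, Finset.univ_unique,
      Finset.sum_singleton, mul_zero, zero_mul, add_zero, zero_add, Finset.sum_const_zero, neg_mul,
      mul_neg, Finset.sum_neg_distrib] <;>
    simp only [mul_assoc, ← Finset.mul_sum] <;>
    rw [key] <;> field_simp <;> ring

lemma step2 {m n : ℕ} (a b : ℂ)
    (x y : Fin m → ℂ) (z w : Fin n → ℂ)
    (hxy : dotT x y = 0) (hzw : dotT z w = 0) :
    (blk 1 (fun _ => 0) 0 (fun _ => 0)
        (fun _ => 0) (fun i j => (gram x)⁻¹ * star (x i) * x j) (fun _ => 0) (fun _ _ => 0)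
        0 (fun _ => 0) 1 (fun _ => 0)
        (fun _ => 0) (fun _ _ => 0) (fun _ => 0)
          (fun i j => (gram z)⁻¹ * star (z i) * z j))
      * blk 0 (fun j => (b * star b + gram y)⁻¹ * star (y j))
          (star b * (b * star b + gram y)⁻¹) (fun _ => 0)
        (fun i => star a * (b * (a * star a + gram w))⁻¹ * y i) (fun _ _ => 0) (fun _ => 0)
          (fun i j => (b * (a * star a + gram w))⁻¹ * y i * star (w j))
        (star a * (a * star a + gram w)⁻¹) (fun _ => 0) 0
          (fun j => (a * star a + gram w)⁻¹ * star (w j))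
        (fun _ => 0) (fun i j => (a * (b * star b + gram y))⁻¹ * w i * star (y j))
          (fun i => star b * (a * (b * star b + gram y))⁻¹ * w i) (fun _ _ => 0) =
      blk 0 (fun j => (b * star b + gram y)⁻¹ * star (y j))
          (star b * (b * star b + gram y)⁻¹) (fun _ => 0)
        (fun _ => 0) (fun _ _ => 0) (fun _ => 0) (fun _ _ => 0)
        (star a * (a * star a + gram w)⁻¹) (fun _ => 0) 0
          (fun j => (a * star a + gram w)⁻¹ * star (w j))
        (fun _ => 0) (fun _ _ => 0) (fun _ => 0) (fun _ _ => 0) := by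
  have kxy : ∑ i, x i * y i = 0 := hxy
  have kzw : ∑ i, z i * w i = 0 := hzw
  ext i j
  rcases i with (i|i)|(i|i) <;> rcases j with (j|j)|(j|j) <;>
    simp only [Matrix.mul_apply, Fintype.sum_sum_type, blk, Matrix.of_apply, Finset.univ_unique,
      Finset.sum_singleton, mul_zero, zero_mul, add_zero, zero_add, one_mul,
      Finset.sum_const_zero] <;>
    simp only [mul_comm, mul_left_comm, mul_assoc, ← Finset.mul_sum, kxy, kzw, mul_zero, zero_mul,
      neg_zero, add_zero, zero_add]
      <;> simp only [← mul_assoc] <;> simp only [← Finset.sum_mul, kxy, kzw, zero_mul]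

theorem dsM_MPCEP_caseI {m n : ℕ} (a b : ℂ) (ha : a ≠ 0) (hb : b ≠ 0)
    (x y : Fin m → ℂ) (z w : Fin n → ℂ)
    (hxy : dotT x y = 0) (hzw : dotT z w = 0)
    (hs : gram x ≠ 0) (hu : gram y ≠ 0) (ht : gram z ≠ 0) (hv : gram w ≠ 0)
    (hr : a * star a + gram w ≠ 0) (hh : b * star b + gram y ≠ 0) :
    letI M := dsM a b x y z w
    letI r := a * star a + gram w
    letI h := b * star b + gram y
    letI Md := blk 0 (fun i => (gram y)⁻¹ * star (y i)) 0 (fun _ => 0)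
        (fun i => (gram x)⁻¹ * star (x i)) (fun _ _ => 0) (fun _ => 0)
          (fun i j => -((gram x)⁻¹ * a * (gram w)⁻¹) * star (x i) * star (w j))
        0 (fun _ => 0) 0 (fun j => (gram w)⁻¹ * star (w j))
        (fun _ => 0) (fun i j => -((gram z)⁻¹ * b * (gram y)⁻¹) * star (z i) * star (y j))
          (fun i => (gram z)⁻¹ * star (z i)) (fun _ _ => 0)
    letI Xc := blk 0 (fun j => h⁻¹ * star (y j)) (star b * h⁻¹) (fun _ => 0)
        (fun i => star a * (b * r)⁻¹ * y i) (fun _ _ => 0) (fun _ => 0)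
          (fun i j => (b * r)⁻¹ * y i * star (w j))
        (star a * r⁻¹) (fun _ => 0) 0 (fun j => r⁻¹ * star (w j))
        (fun _ => 0) (fun i j => (a * h)⁻¹ * w i * star (y j))
          (fun i => star b * (a * h)⁻¹ * w i) (fun _ _ => 0)
    Md * M * Xc =
      blk 0 (fun j => h⁻¹ * star (y j)) (star b * h⁻¹) (fun _ => 0)
        (fun _ => 0) (fun _ _ => 0) (fun _ => 0) (fun _ _ => 0)
        (star a * r⁻¹) (fun _ => 0) 0 (fun j => r⁻¹ * star (w j))
        (fun _ => 0) (fun _ _ => 0) (fun _ => 0) (fun _ _ => 0) := by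
  rw [step1 a b x y z w hs hu ht hv]
  exact step2 a b x y z w hxy hzw
end

section
/- Let M be the double star block matrix with xᵀy = 0 = zᵀw, a, b ≠ 0, and suppose s, u, t, v (the Gram scalars of x, y, z, w), r = aā + w*w and h = bb̄ + y*y are all nonzero. Then the GDC inverse M† M^⊕ M equals [[0, ā(br)⁻¹xᵀ, b⁻¹, 0],[0, 0, 0, 0],[a⁻¹, 0, 0, b̄(ah)⁻¹zᵀ],[0, 0, 0, 0]]. -/
/-!
Associate the product as `M† (M^⊕ M)`. Because `h = b b̄ + y*y` and `r = a ā + w*w`, the matrix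
`M^⊕ M` collapses: its second block row is `b⁻¹ y` times its third and its fourth block row is
`a⁻¹ w` times its first. Writing `Rᵢ` for the `i`-th block row, the second and fourth block rows
of `M†` are `s⁻¹ x̄ (R₁ - a v⁻¹ w* R₄)` and `t⁻¹ z̄ (R₃ - b u⁻¹ y* R₂)`, which vanish on such a
matrix, while its first and third pick out `b⁻¹ R₃` and `a⁻¹ R₁`.
-/

open Matrix BigOperators

section DoubleStar

variable {m n : ℕ}

theorem blk_mul
    (A11 : ℂ) (A12 : Fin m → ℂ) (A13 : ℂ) (A14 : Fin n → ℂ)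
    (A21 : Fin m → ℂ) (A22 : Fin m → Fin m → ℂ) (A23 : Fin m → ℂ) (A24 : Fin m → Fin n → ℂ)
    (A31 : ℂ) (A32 : Fin m → ℂ) (A33 : ℂ) (A34 : Fin n → ℂ)
    (A41 : Fin n → ℂ) (A42 : Fin n → Fin m → ℂ) (A43 : Fin n → ℂ) (A44 : Fin n → Fin n → ℂ)
    (B11 : ℂ) (B12 : Fin m → ℂ) (B13 : ℂ) (B14 : Fin n → ℂ)
    (B21 : Fin m → ℂ) (B22 : Fin m → Fin m → ℂ) (B23 : Fin m → ℂ) (B24 : Fin m → Fin n → ℂ)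
    (B31 : ℂ) (B32 : Fin m → ℂ) (B33 : ℂ) (B34 : Fin n → ℂ)
    (B41 : Fin n → ℂ) (B42 : Fin n → Fin m → ℂ) (B43 : Fin n → ℂ) (B44 : Fin n → Fin n → ℂ) :
    blk A11 A12 A13 A14 A21 A22 A23 A24 A31 A32 A33 A34 A41 A42 A43 A44 *
    blk B11 B12 B13 B14 B21 B22 B23 B24 B31 B32 B33 B34 B41 B42 B43 B44 =
    blk
      (A11 * B11 + (∑ j, A12 j * B21 j) + A13 * B31 + (∑ j, A14 j * B41 j))
      (fun k => A11 * B12 k + (∑ j, A12 j * B22 j k) + A13 * B32 k + (∑ j, A14 j * B42 j k))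
      (A11 * B13 + (∑ j, A12 j * B23 j) + A13 * B33 + (∑ j, A14 j * B43 j))
      (fun k => A11 * B14 k + (∑ j, A12 j * B24 j k) + A13 * B34 k + (∑ j, A14 j * B44 j k))
      (fun i => A21 i * B11 + (∑ j, A22 i j * B21 j) + A23 i * B31 + (∑ j, A24 i j * B41 j))
      (fun i k => A21 i * B12 k + (∑ j, A22 i j * B22 j k) + A23 i * B32 k + (∑ j, A24 i j * B42 j k))
      (fun i => A21 i * B13 + (∑ j, A22 i j * B23 j) + A23 i * B33 + (∑ j, A24 i j * B43 j))
      (fun i k => A21 i * B14 k + (∑ j, A22 i j * B24 j k) + A23 i * B34 k + (∑ j, A24 i j * B44 j k))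
      (A31 * B11 + (∑ j, A32 j * B21 j) + A33 * B31 + (∑ j, A34 j * B41 j))
      (fun k => A31 * B12 k + (∑ j, A32 j * B22 j k) + A33 * B32 k + (∑ j, A34 j * B42 j k))
      (A31 * B13 + (∑ j, A32 j * B23 j) + A33 * B33 + (∑ j, A34 j * B43 j))
      (fun k => A31 * B14 k + (∑ j, A32 j * B24 j k) + A33 * B34 k + (∑ j, A34 j * B44 j k))
      (fun i => A41 i * B11 + (∑ j, A42 i j * B21 j) + A43 i * B31 + (∑ j, A44 i j * B41 j))
      (fun i k => A41 i * B12 k + (∑ j, A42 i j * B22 j k) + A43 i * B32 k + (∑ j, A44 i j * B42 j k))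
      (fun i => A41 i * B13 + (∑ j, A42 i j * B23 j) + A43 i * B33 + (∑ j, A44 i j * B43 j))
      (fun i k => A41 i * B14 k + (∑ j, A42 i j * B24 j k) + A43 i * B34 k + (∑ j, A44 i j * B44 j k)) := by
  ext (((_ | i) | (_ | i))) (((_ | k) | (_ | k))) <;>
    simp only [blk, mul_apply, of_apply, Fintype.sum_sum_type, Fintype.sum_unique] <;> ring

theorem sum_mul_star_mul_self (p : ℂ) (v : Fin m → ℂ) :
    ∑ j, p * star (v j) * v j = p * gram v := by
  simp only [_root_.gram, Finset.mul_sum, mul_assoc]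

theorem sum_mul_star_mul_mul_self (p q : ℂ) (v : Fin m → ℂ) :
    ∑ j, p * star (v j) * (q * v j) = p * q * gram v := by
  simp only [_root_.gram, Finset.mul_sum]
  exact Finset.sum_congr rfl fun j _ => by ring

/-- The paper's explicit block formulas for the core-EP inverse `M^⊕` and the Moore–Penrose
inverse `M†` of `dsM a b x y z w`. -/
noncomputable def dsCoreEP (a b : ℂ) (y : Fin m → ℂ) (w : Fin n → ℂ) :
    Matrix (Idx m n) (Idx m n) ℂ :=
  letI r := a * star a + gram w
  letI h := b * star b + gram y
  blk 0 (fun j => h⁻¹ * star (y j)) (star b * h⁻¹) (fun _ => 0)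
    (fun i => star a * (b * r)⁻¹ * y i) (fun _ _ => 0) (fun _ => 0)
      (fun i j => (b * r)⁻¹ * y i * star (w j))
    (star a * r⁻¹) (fun _ => 0) 0 (fun j => r⁻¹ * star (w j))
    (fun _ => 0) (fun i j => (a * h)⁻¹ * w i * star (y j))
      (fun i => star b * (a * h)⁻¹ * w i) (fun _ _ => 0)

noncomputable def dsMoorePenrose (a b : ℂ) (x y : Fin m → ℂ) (z w : Fin n → ℂ) :
    Matrix (Idx m n) (Idx m n) ℂ :=
  blk 0 (fun i => (gram y)⁻¹ * star (y i)) 0 (fun _ => 0)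
    (fun i => (gram x)⁻¹ * star (x i)) (fun _ _ => 0) (fun _ => 0)
      (fun i j => -((gram x)⁻¹ * a * (gram w)⁻¹) * star (x i) * star (w j))
    0 (fun _ => 0) 0 (fun j => (gram w)⁻¹ * star (w j))
    (fun _ => 0) (fun i j => -((gram z)⁻¹ * b * (gram y)⁻¹) * star (z i) * star (y j))
      (fun i => (gram z)⁻¹ * star (z i)) (fun _ _ => 0)

theorem dsCoreEP_mul_dsM {a b : ℂ} {x y : Fin m → ℂ} {z w : Fin n → ℂ} (ha : a ≠ 0) (hb : b ≠ 0)
    (hr : a * star a + gram w ≠ 0) (hh : b * star b + gram y ≠ 0) :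
    letI r := a * star a + gram w
    letI h := b * star b + gram y
    dsCoreEP a b y w * dsM a b x y z w =
      blk 1 (fun _ => 0) 0 (fun k => star b * h⁻¹ * z k)
        (fun _ => 0) (fun i k => b⁻¹ * (star a * r⁻¹) * x k * y i) (fun i => b⁻¹ * y i)
          (fun _ _ => 0)
        0 (fun k => star a * r⁻¹ * x k) 1 (fun _ => 0)
        (fun i => a⁻¹ * w i) (fun _ _ => 0) (fun _ => 0)
          (fun i k => a⁻¹ * (star b * h⁻¹) * z k * w i) := by
  have hr' : star a * a + gram w ≠ 0 := by rwa [mul_comm]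
  have hh' : star b * b + gram y ≠ 0 := by rwa [mul_comm]
  simp only [dsCoreEP, dsM, blk_mul, mul_zero, zero_mul, add_zero, zero_add,
    Finset.sum_const_zero, sum_mul_star_mul_self]
  congr 1 <;> (try funext) <;> field_simp <;> ring

theorem dsMoorePenrose_mul {a b p c : ℂ} {x y : Fin m → ℂ} {z w : Fin n → ℂ}
    (ha : a ≠ 0) (hb : b ≠ 0) (hu : gram y ≠ 0) (hv : gram w ≠ 0) :
    dsMoorePenrose a b x y z w *
      blk 1 (fun _ => 0) 0 (fun k => c * z k)
        (fun _ => 0) (fun i k => b⁻¹ * p * x k * y i) (fun i => b⁻¹ * y i) (fun _ _ => 0)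
        0 (fun k => p * x k) 1 (fun _ => 0)
        (fun i => a⁻¹ * w i) (fun _ _ => 0) (fun _ => 0) (fun i k => a⁻¹ * c * z k * w i) =
      blk 0 (fun k => b⁻¹ * p * x k) b⁻¹ (fun _ => 0)
        (fun _ => 0) (fun _ _ => 0) (fun _ => 0) (fun _ _ => 0)
        a⁻¹ (fun _ => 0) 0 (fun k => a⁻¹ * c * z k)
        (fun _ => 0) (fun _ _ => 0) (fun _ => 0) (fun _ _ => 0) := by
  simp only [dsMoorePenrose, blk_mul, mul_zero, zero_mul, add_zero, zero_add,
    Finset.sum_const_zero, sum_mul_star_mul_mul_self]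
  congr 1 <;> (try funext) <;> field_simp <;> ring

end DoubleStar

theorem dsM_GDC_caseI_general {m n : ℕ} (a b : ℂ) (ha : a ≠ 0) (hb : b ≠ 0)
    (x y : Fin m → ℂ) (z w : Fin n → ℂ)
    (hu : gram y ≠ 0) (hv : gram w ≠ 0)
    (hr : a * star a + gram w ≠ 0) (hh : b * star b + gram y ≠ 0) :
    letI M := dsM a b x y z w
    letI r := a * star a + gram w
    letI h := b * star b + gram y
    letI Md := blk 0 (fun i => (gram y)⁻¹ * star (y i)) 0 (fun _ => 0)
        (fun i => (gram x)⁻¹ * star (x i)) (fun _ _ => 0) (fun _ => 0)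
          (fun i j => -((gram x)⁻¹ * a * (gram w)⁻¹) * star (x i) * star (w j))
        0 (fun _ => 0) 0 (fun j => (gram w)⁻¹ * star (w j))
        (fun _ => 0) (fun i j => -((gram z)⁻¹ * b * (gram y)⁻¹) * star (z i) * star (y j))
          (fun i => (gram z)⁻¹ * star (z i)) (fun _ _ => 0)
    letI Xc := blk 0 (fun j => h⁻¹ * star (y j)) (star b * h⁻¹) (fun _ => 0)
        (fun i => star a * (b * r)⁻¹ * y i) (fun _ _ => 0) (fun _ => 0)
          (fun i j => (b * r)⁻¹ * y i * star (w j))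
        (star a * r⁻¹) (fun _ => 0) 0 (fun j => r⁻¹ * star (w j))
        (fun _ => 0) (fun i j => (a * h)⁻¹ * w i * star (y j))
          (fun i => star b * (a * h)⁻¹ * w i) (fun _ _ => 0)
    Md * Xc * M =
      blk 0 (fun j => star a * (b * r)⁻¹ * x j) b⁻¹ (fun _ => 0)
        (fun _ => 0) (fun _ _ => 0) (fun _ => 0) (fun _ _ => 0)
        a⁻¹ (fun _ => 0) 0 (fun j => star b * (a * h)⁻¹ * z j)
        (fun _ => 0) (fun _ _ => 0) (fun _ => 0) (fun _ _ => 0) := by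
  show dsMoorePenrose a b x y z w * dsCoreEP a b y w * dsM a b x y z w = _
  rw [Matrix.mul_assoc, dsCoreEP_mul_dsM ha hb hr hh, dsMoorePenrose_mul ha hb hu hv]
  congr 1 <;> funext <;> simp only [mul_inv] <;> ring

theorem dsM_GDC_caseI {m n : ℕ} (a b : ℂ) (ha : a ≠ 0) (hb : b ≠ 0)
    (x y : Fin m → ℂ) (z w : Fin n → ℂ)
    (hxy : dotT x y = 0) (hzw : dotT z w = 0)
    (hs : gram x ≠ 0) (hu : gram y ≠ 0) (ht : gram z ≠ 0) (hv : gram w ≠ 0)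
    (hr : a * star a + gram w ≠ 0) (hh : b * star b + gram y ≠ 0) :
    letI M := dsM a b x y z w
    letI r := a * star a + gram w
    letI h := b * star b + gram y
    letI Md := blk 0 (fun i => (gram y)⁻¹ * star (y i)) 0 (fun _ => 0)
        (fun i => (gram x)⁻¹ * star (x i)) (fun _ _ => 0) (fun _ => 0)
          (fun i j => -((gram x)⁻¹ * a * (gram w)⁻¹) * star (x i) * star (w j))
        0 (fun _ => 0) 0 (fun j => (gram w)⁻¹ * star (w j))
        (fun _ => 0) (fun i j => -((gram z)⁻¹ * b * (gram y)⁻¹) * star (z i) * star (y j))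
          (fun i => (gram z)⁻¹ * star (z i)) (fun _ _ => 0)
    letI Xc := blk 0 (fun j => h⁻¹ * star (y j)) (star b * h⁻¹) (fun _ => 0)
        (fun i => star a * (b * r)⁻¹ * y i) (fun _ _ => 0) (fun _ => 0)
          (fun i j => (b * r)⁻¹ * y i * star (w j))
        (star a * r⁻¹) (fun _ => 0) 0 (fun j => r⁻¹ * star (w j))
        (fun _ => 0) (fun i j => (a * h)⁻¹ * w i * star (y j))
          (fun i => star b * (a * h)⁻¹ * w i) (fun _ _ => 0)
    Md * Xc * M =
      blk 0 (fun j => star a * (b * r)⁻¹ * x j) b⁻¹ (fun _ => 0)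
        (fun _ => 0) (fun _ _ => 0) (fun _ => 0) (fun _ _ => 0)
        a⁻¹ (fun _ => 0) 0 (fun j => star b * (a * h)⁻¹ * z j)
        (fun _ => 0) (fun _ _ => 0) (fun _ => 0) (fun _ _ => 0) :=
  dsM_GDC_caseI_general a b ha hb x y z w hu hv hr hh
end
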